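/- Let H be an infinite group which is not co-Hopfian (i.e., admits an injective but non-surjective endomorphism). Then for any finite group F, the lampshuffler Shuffler(H) = FSym(H) ⋊ H contains a subgroup isomorphic to the wreath product F ≀ H. -/

import Mathlib

open Pointwise

/-- The group of finitely supported permutations of a set `X`, as a subgroup of
the full permutation group. -/
def fsym (X : Type*) : Subgroup (Equiv.Perm X) where
  carrier := {σ : Equiv.Perm X | {x : X | σ x ≠ x}.Finite}
  one_mem' := by simp
  mul_mem' := by
    intro a b ha hb
    refine Set.Finite.subset (ha.union hb) ?_
    intro x hx
    simp only [Set.mem_setOf_eq, Equiv.Perm.mul_apply] at hx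
    by_contra hc
    simp only [Set.mem_union, Set.mem_setOf_eq, not_or, not_not] at hc
    rw [hc.2, hc.1] at hx
    exact hx rfl
  inv_mem' := by
    intro a ha
    refine Set.Finite.subset ha ?_
    intro x hx
    simp only [Set.mem_setOf_eq] at hx ⊢
    intro h
    apply hx
    conv_lhs => rw [← h]
    simp

theorem conj_mem_fsym {X : Type*} (c : Equiv.Perm X) {σ : Equiv.Perm X}
    (h : σ ∈ fsym X) : c * σ * c⁻¹ ∈ fsym X := by
  refine Set.Finite.subset (Set.Finite.image c h) ?_
  intro x hx
  simp only [Set.mem_setOf_eq, Equiv.Perm.mul_apply] at hx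
  refine ⟨c⁻¹ x, ?_, by simp⟩
  simp only [Set.mem_setOf_eq]
  intro hc
  apply hx
  rw [hc]
  simp

/-- The action of a group `H` on the permutations of `H`, by
`(h·σ)(x) = h σ(h⁻¹ x)`, i.e. conjugation by the left translation by `h`. -/
def permAct (H : Type*) [Group H] : H →* MulAut (Equiv.Perm H) :=
  MulAut.conj.comp (MulAction.toPermHom H H)

theorem permAct_apply {H : Type*} [Group H] (h : H) (σ : Equiv.Perm H) (x : H) :
    permAct H h σ x = h * σ (h⁻¹ * x) := rfl

theorem permAct_mem_fsym {H : Type*} [Group H] (h : H) {σ : Equiv.Perm H}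
    (hσ : σ ∈ fsym H) : permAct H h σ ∈ fsym H :=
  conj_mem_fsym _ hσ

/-- The "unrestricted" lampshuffler: the semidirect product of the full
permutation group of `H` with `H`. -/
abbrev BigShuffler (H : Type*) [Group H] := SemidirectProduct (Equiv.Perm H) H (permAct H)

/-- The lampshuffler group `Shuffler(H) = FSym(H) ⋊ H`, realised as the
subgroup of `BigShuffler H` whose permutation part is finitely supported. -/
def Shuffler (H : Type*) [Group H] : Subgroup (BigShuffler H) where
  carrier := {p | p.left ∈ fsym H}
  one_mem' := by
    simp only [Set.mem_setOf_eq, SemidirectProduct.one_left]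
    exact one_mem _
  mul_mem' := by
    intro a b ha hb
    simp only [Set.mem_setOf_eq, SemidirectProduct.mul_left] at *
    exact mul_mem ha (permAct_mem_fsym _ hb)
  inv_mem' := by
    intro a ha
    simp only [Set.mem_setOf_eq, SemidirectProduct.inv_left] at *
    exact permAct_mem_fsym _ (inv_mem ha)

/-- The restricted direct sum `⊕_K A`, as the subgroup of `K → A` of functions
with finite (multiplicative) support. -/
def finSuppFuns (K A : Type*) [Group A] : Subgroup (K → A) where
  carrier := {f | (Function.mulSupport f).Finite}
  one_mem' := by simp [Function.mulSupport_one]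
  mul_mem' := by
    intro a b ha hb
    exact Set.Finite.subset (ha.union hb) (Function.mulSupport_mul a b)
  inv_mem' := by
    intro a ha
    simpa [Function.mulSupport_inv] using ha

/-- The translation action of `K` on `K → A`: `(k·f)(x) = f(k⁻¹ x)`. -/
def wreathAct (A K : Type*) [Group A] [Group K] : K →* MulAut (K → A) where
  toFun k :=
    { toFun := fun f x => f (k⁻¹ * x)
      invFun := fun f x => f (k * x)
      left_inv := by intro f; funext x; simp [mul_assoc]
      right_inv := by intro f; funext x; simp [mul_assoc]
      map_mul' := by intro f g; rfl }
  map_one' := by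
    ext f x
    simp
  map_mul' := by
    intro k₁ k₂
    ext f x
    simp [mul_assoc]

/-- The "unrestricted" wreath product `(K → A) ⋊ K`. -/
abbrev BigWreath (A K : Type*) [Group A] [Group K] :=
  SemidirectProduct (K → A) K (wreathAct A K)

theorem wreathAct_mem_finSuppFuns {A K : Type*} [Group A] [Group K] (k : K)
    {f : K → A} (hf : f ∈ finSuppFuns K A) : wreathAct A K k f ∈ finSuppFuns K A := by
  refine Set.Finite.subset (Set.Finite.image (fun x => k * x) hf) ?_
  intro x hx
  exact ⟨k⁻¹ * x, hx, by simp⟩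

/-- The (restricted) wreath product `A ≀ K = (⊕_K A) ⋊ K`, realised as the
subgroup of `BigWreath A K` whose function part has finite support. -/
def Wreath (A K : Type*) [Group A] [Group K] : Subgroup (BigWreath A K) where
  carrier := {p | p.left ∈ finSuppFuns K A}
  one_mem' := by
    simp only [Set.mem_setOf_eq, SemidirectProduct.one_left]
    exact one_mem _
  mul_mem' := by
    intro a b ha hb
    simp only [Set.mem_setOf_eq, SemidirectProduct.mul_left] at *
    exact mul_mem ha (wreathAct_mem_finSuppFuns _ hb)
  inv_mem' := by
    intro a ha
    simp only [Set.mem_setOf_eq, SemidirectProduct.inv_left] at *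
    exact wreathAct_mem_finSuppFuns _ (inv_mem ha)



/-!
Iterating an injective, non-surjective endomorphism `ψ` of `H` yields an injective
endomorphism `θ` whose image has at least `|F|` right cosets; choosing representatives
`ι a` for `a ∈ F` gives an injection `H × F ↪ H`, `(h, a) ↦ θ h * ι a`, which intertwines
left translation by `k` on `H × F` with left translation by `θ k` on `H`. The wreath
product `F ≀ H` acts faithfully on `H × F` (lamps act fibrewise by left multiplication,
`H` by translation), and transporting this action along the injection, extended by the
identity off its image, embeds `F ≀ H` into `Shuffler(H)`.
-/

open Function

namespace SemidirectProduct

variable {N₁ G₁ N₂ G₂ : Type*} [Group N₁] [Group G₁] [Group N₂] [Group G₂]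
  {φ₁ : G₁ →* MulAut N₁} {φ₂ : G₂ →* MulAut N₂}

theorem map_injective {fn : N₁ →* N₂} {fg : G₁ →* G₂}
    (h : ∀ g : G₁, fn.comp (φ₁ g).toMonoidHom = (φ₂ (fg g)).toMonoidHom.comp fn)
    (hn : Injective fn) (hg : Injective fg) : Injective (map fn fg h) :=
  fun _ _ hxy => SemidirectProduct.ext (hn (congrArg left hxy)) (hg (congrArg right hxy))

end SemidirectProduct

section CosetSeparation

variable {H : Type*} [Group H]

theorem exists_injective_endo_separating_rightCosets {ψ : H →* H} (hi : Injective ψ)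
    (hs : ¬ Surjective ψ) (n : ℕ) :
    ∃ θ : H →* H, Injective θ ∧
      ∃ x : Fin n → H, ∀ i j, x i * (x j)⁻¹ ∈ θ.range → i = j := by
  induction n with
  | zero => exact ⟨MonoidHom.id H, injective_id, Fin.elim0, fun i => i.elim0⟩
  | succ n ih =>
    obtain ⟨θ, hθ, x, hx⟩ := ih
    obtain ⟨t, ht⟩ : ∃ t, t ∉ ψ.range := by simpa [Surjective] using hs
    -- `ψ` pushes the old representatives into `ψ.range`, which `t` avoids.
    refine ⟨ψ.comp θ, hi.comp hθ, Fin.cons t (ψ ∘ x), ?_⟩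
    rintro i j ⟨c, hc⟩
    induction i using Fin.cases <;> induction j using Fin.cases
    case zero.zero => rfl
    case zero.succ j =>
      refine (ht ⟨θ c * x j, ?_⟩).elim
      simp_all [eq_mul_inv_iff_mul_eq]
    case succ.zero i =>
      refine (ht ⟨(θ c)⁻¹ * x i, ?_⟩).elim
      simp_all [eq_mul_inv_iff_mul_eq, inv_mul_eq_iff_eq_mul]
    case succ.succ i j =>
      simp only [Fin.cons_succ, comp_apply, MonoidHom.comp_apply, ← map_inv, ← map_mul] at hc
      exact congrArg Fin.succ (hx i j ⟨c, hi hc⟩)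

end CosetSeparation

section Embedding

variable {H F : Type*} [Group H]

def cosetEmbedding {θ : H →* H} (hθ : Injective θ) {ι : F → H}
    (hι : ∀ a b, ι a * (ι b)⁻¹ ∈ θ.range → a = b) : H × F ↪ H where
  toFun p := θ p.1 * ι p.2
  inj' := by
    rintro ⟨h, a⟩ ⟨h', b⟩ (he : θ h * ι a = θ h' * ι b)
    obtain rfl : a = b := hι a b ⟨h⁻¹ * h', by
      rw [map_mul, map_inv, inv_mul_eq_iff_eq_mul, ← mul_assoc, he, mul_inv_cancel_right]⟩
    exact Prod.ext (hθ (mul_right_cancel he)) rfl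

theorem cosetEmbedding_mul_left {θ : H →* H} (hθ : Injective θ) {ι : F → H}
    (hι : ∀ a b, ι a * (ι b)⁻¹ ∈ θ.range → a = b) (k h : H) (a : F) :
    cosetEmbedding hθ hι (k * h, a) = θ k * cosetEmbedding hθ hι (h, a) := by
  change θ (k * h) * ι a = θ k * (θ h * ι a)
  rw [map_mul, mul_assoc]

end Embedding

section Lamps

variable (H F : Type*) [Group F]

def shearHom : (H → F) →* Equiv.Perm (H × F) where
  toFun f := Equiv.prodShear (Equiv.refl H) fun h => Equiv.mulLeft (f h)
  map_one' := by ext <;> simp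
  map_mul' f g := by ext <;> simp

variable {H F}

theorem shearHom_apply (f : H → F) (p : H × F) : shearHom H F f p = (p.1, f p.1 * p.2) := rfl

theorem shearHom_injective : Injective (shearHom H F) := by
  rw [injective_iff_map_eq_one]
  intro f hf
  funext h
  simpa [shearHom_apply] using congrArg Prod.snd (Equiv.ext_iff.mp hf (h, 1))

noncomputable def lampHom (ι : H × F ↪ H) : (H → F) →* Equiv.Perm H :=
  (Equiv.Perm.viaEmbeddingHom ι).comp (shearHom H F)

theorem lampHom_injective (ι : H × F ↪ H) : Injective (lampHom ι) :=
  (Equiv.Perm.viaEmbeddingHom_injective ι).comp shearHom_injective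

theorem lampHom_apply_image (ι : H × F ↪ H) (f : H → F) (p : H × F) :
    lampHom ι f (ι p) = ι (p.1, f p.1 * p.2) :=
  Equiv.Perm.viaEmbedding_apply _ ι p

theorem lampHom_apply_of_notMem (ι : H × F ↪ H) (f : H → F) {x : H} (hx : x ∉ Set.range ι) :
    lampHom ι f x = x :=
  Equiv.Perm.viaEmbedding_apply_of_notMem _ ι x hx

theorem lampHom_mem_fsym [Finite F] (ι : H × F ↪ H) {f : H → F}
    (hf : f ∈ finSuppFuns H F) : lampHom ι f ∈ fsym H := by
  refine ((Set.Finite.prod hf Set.finite_univ).image ι).subset ?_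
  intro x hx
  by_cases hr : x ∈ Set.range ι
  · obtain ⟨⟨h, a⟩, rfl⟩ := hr
    refine ⟨(h, a), ⟨?_, trivial⟩, rfl⟩
    intro hfh
    apply hx
    rw [lampHom_apply_image]
    simp only [hfh, one_mul]
  · exact (hx (lampHom_apply_of_notMem ι f hr)).elim

variable [Group H]

theorem permAct_lampHom {θ : H →* H} {ι : H × F ↪ H}
    (hι : ∀ k h a, ι (k * h, a) = θ k * ι (h, a)) (k : H) (f : H → F) :
    permAct H (θ k) (lampHom ι f) = lampHom ι (wreathAct F H k f) := by
  ext x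
  rw [permAct_apply]
  by_cases hx : x ∈ Set.range ι
  · obtain ⟨⟨h, a⟩, rfl⟩ := hx
    have hshift : (θ k)⁻¹ * ι (h, a) = ι (k⁻¹ * h, a) := by
      rw [hι, map_inv]
    rw [hshift, lampHom_apply_image, lampHom_apply_image, ← hι, mul_inv_cancel_left]
    rfl
  · have hx' : (θ k)⁻¹ * x ∉ Set.range ι := by
      rintro ⟨⟨h, a⟩, he⟩
      exact hx ⟨(k * h, a), by rw [hι, he, mul_inv_cancel_left]⟩
    rw [lampHom_apply_of_notMem ι f hx', lampHom_apply_of_notMem ι _ hx, mul_inv_cancel_left]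

noncomputable def wreathToShuffler {θ : H →* H} {ι : H × F ↪ H}
    (hι : ∀ k h a, ι (k * h, a) = θ k * ι (h, a)) : BigWreath F H →* BigShuffler H :=
  SemidirectProduct.map (lampHom ι) θ fun k =>
    MonoidHom.ext fun f => (permAct_lampHom hι k f).symm

theorem wreathToShuffler_injective {θ : H →* H} (hθ : Injective θ) {ι : H × F ↪ H}
    (hι : ∀ k h a, ι (k * h, a) = θ k * ι (h, a)) : Injective (wreathToShuffler hι) :=
  SemidirectProduct.map_injective _ (lampHom_injective ι) hθ

theorem wreathToShuffler_mem_shuffler [Finite F] {θ : H →* H} {ι : H × F ↪ H}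
    (hι : ∀ k h a, ι (k * h, a) = θ k * ι (h, a)) {p : BigWreath F H} (hp : p ∈ Wreath F H) :
    wreathToShuffler hι p ∈ Shuffler H :=
  lampHom_mem_fsym ι hp

end Lamps

theorem stmt_5_general (H : Type*) [Group H]
    (hH : ∃ ψ : H →* H, Function.Injective ψ ∧ ¬ Function.Surjective ψ)
    (F : Type*) [Group F] [Finite F] :
    ∃ Φ : ↥(Wreath F H) →* ↥(Shuffler H), Function.Injective Φ := by
  obtain ⟨ψ, hψi, hψs⟩ := hH
  obtain ⟨n, ⟨e⟩⟩ := Finite.exists_equiv_fin F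
  obtain ⟨θ, hθ, x, hx⟩ := exists_injective_endo_separating_rightCosets hψi hψs n
  have hι : ∀ a b, x (e a) * (x (e b))⁻¹ ∈ θ.range → a = b :=
    fun a b hab => e.injective (hx _ _ hab)
  have hequiv := cosetEmbedding_mul_left hθ hι
  refine ⟨((wreathToShuffler hequiv).comp (Wreath F H).subtype).codRestrict (Shuffler H)
    fun p => wreathToShuffler_mem_shuffler hequiv p.2, fun p q hpq => ?_⟩
  exact Subtype.ext (wreathToShuffler_injective hθ hequiv (congrArg Subtype.val hpq))

/-- Let `H` be an infinite group which is not co-Hopfian (it admits an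
injective non-surjective endomorphism). Then, for any finite group `F`, the
lampshuffler `Shuffler(H) = FSym(H) ⋊ H` contains a subgroup isomorphic to the
wreath product `F ≀ H`, i.e. `F ≀ H` embeds into `Shuffler(H)`. -/
theorem stmt_5 (H : Type*) [Group H] [Infinite H]
    (hH : ∃ ψ : H →* H, Function.Injective ψ ∧ ¬ Function.Surjective ψ)
    (F : Type*) [Group F] [Finite F] :
    ∃ Φ : ↥(Wreath F H) →* ↥(Shuffler H), Function.Injective Φ :=
  stmt_5_general H hH F
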